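/- Let s ≥ 2 and let F be a stable 3-graph with vertex set [n] that has property U(s, 2s+1) and satisfies ν(F) ≥ 2. Then ν(∂F − [4]) ≤ s − 2, where ∂F − [4] denotes the set of edges of the shadow ∂F that are disjoint from {1, 2, 3, 4}. -/

import Mathlib

open Finset

/-- `F₁ ≺ F₂`: same size, and the `i`-th smallest element of `F₁` is at most
the `i`-th smallest element of `F₂`. -/
def PrecS (A B : Finset ℕ) : Prop :=
  A.card = B.card ∧
    ∀ i, i < A.card → (A.sort (· ≤ ·)).getD i 0 ≤ (B.sort (· ≤ ·)).getD i 0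

/-- A family of subsets of `[n] = {1,…,n}` is stable (shifted). -/
def IsStable (n : ℕ) (F : Finset (Finset ℕ)) : Prop :=
  ∀ A B : Finset ℕ, A ⊆ Finset.Icc 1 n → B ∈ F → PrecS A B → A ∈ F

/-- Property `U(s, q)`: any `s` edges (repetitions allowed) have union of size at most `q`. -/
def HasU (F : Finset (Finset ℕ)) (s q : ℕ) : Prop :=
  ∀ f : Fin s → Finset ℕ, (∀ i, f i ∈ F) → (Finset.univ.biUnion f).card ≤ q

/-- Matching number: the maximum size of a set of pairwise disjoint edges of `F`. -/
def matchNum (F : Finset (Finset ℕ)) : ℕ :=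
  (F.powerset.filter fun M => ∀ a ∈ M, ∀ b ∈ M, a ≠ b → Disjoint a b).sup Finset.card

/-- Shadow of a 3-uniform family: all 2-element subsets of its edges. -/
def shadow2 (F : Finset (Finset ℕ)) : Finset (Finset ℕ) :=
  F.biUnion fun f => f.powersetCard 2

/-- Deletion of the first `i` vertices: edges disjoint from `[i] = {1,…,i}`. -/
def del (F : Finset (Finset ℕ)) (i : ℕ) : Finset (Finset ℕ) :=
  F.filter fun e => Disjoint e (Finset.Icc 1 i)

/-!
If `∂F − [4]` contained `s − 1` disjoint pairs, stability would put `{1} ∪ e` into `F` for each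
such pair `e`, and, since `ν(F) ≥ 2` yields an edge missing `1`, also `{2, 3, 4}`. These `s` edges
cover `[4]` together with the `2(s − 1)` vertices of the pairs, that is `2s + 2` vertices,
contradicting `U(s, 2s + 1)`.
-/

lemma exists_matching_of_le_matchNum {F : Finset (Finset ℕ)} {k : ℕ} (h : k ≤ matchNum F) :
    ∃ M ⊆ F, (M : Set (Finset ℕ)).PairwiseDisjoint id ∧ M.card = k := by
  obtain ⟨M, hM, hMcard⟩ := exists_mem_eq_sup
    (F.powerset.filter fun M => ∀ a ∈ M, ∀ b ∈ M, a ≠ b → Disjoint a b) ⟨∅, by simp⟩ card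
  rw [matchNum, hMcard] at h
  obtain ⟨M', hM'M, hM'card⟩ := exists_subset_card_eq h
  rw [mem_filter, mem_powerset] at hM
  exact ⟨M', hM'M.trans hM.1, fun a ha b hb => hM.2 a (hM'M ha) b (hM'M hb), hM'card⟩

lemma exists_mem_notMem_of_two_le_matchNum {F : Finset (Finset ℕ)} (h : 2 ≤ matchNum F) (x : ℕ) :
    ∃ f ∈ F, x ∉ f := by
  obtain ⟨M, hMF, hM, hMcard⟩ := exists_matching_of_le_matchNum h
  obtain ⟨f, g, hfg, rfl⟩ := card_eq_two.mp hMcard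
  by_cases hx : x ∈ f
  · exact ⟨g, hMF (by simp), disjoint_left.mp (hM (by simp) (by simp) hfg) hx⟩
  · exact ⟨f, hMF (by simp), hx⟩

lemma HasU.card_biUnion_le {F G : Finset (Finset ℕ)} {s q : ℕ} (hU : HasU F s q) (hGF : G ⊆ F)
    (hG : G.Nonempty) (hGs : G.card ≤ s) : (G.biUnion id).card ≤ q := by
  obtain ⟨g, hg⟩ := hG
  let f : Fin s → Finset ℕ := fun i => if h : (i : ℕ) < G.toList.length then G.toList[i] else g
  have hfG : ∀ i, f i ∈ G := fun i => by
    unfold f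
    split_ifs
    · exact mem_toList.mp (List.getElem_mem _)
    · exact hg
  refine le_trans (card_le_card fun x hx => ?_) (hU f fun i => hGF (hfG i))
  obtain ⟨t, ht, hxt⟩ := mem_biUnion.mp hx
  obtain ⟨j, hj, rfl⟩ := List.mem_iff_getElem.mp (mem_toList.mpr ht)
  rw [length_toList] at hj
  exact mem_biUnion.mpr ⟨⟨j, by omega⟩, mem_univ _, by simpa [f, hj] using hxt⟩

lemma sort_triple {a b c : ℕ} (hab : a < b) (hbc : b < c) :
    ({a, b, c} : Finset ℕ).sort (· ≤ ·) = [a, b, c] := by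
  rw [sort_insert _ (by simp; omega) (by simp; omega),
    sort_insert _ (by simp; omega) (by simp; omega), sort_singleton]

lemma card_triple {a b c : ℕ} (hab : a < b) (hbc : b < c) : ({a, b, c} : Finset ℕ).card = 3 := by
  rw [card_insert_of_notMem (by simp; omega), card_pair hbc.ne]

lemma precS_triple {a b c x y z : ℕ} (hab : a < b) (hbc : b < c) (hxy : x < y) (hyz : y < z)
    (hax : a ≤ x) (hby : b ≤ y) (hcz : c ≤ z) : PrecS {a, b, c} {x, y, z} := by
  refine ⟨by rw [card_triple hab hbc, card_triple hxy hyz], fun i hi => ?_⟩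
  rw [card_triple hab hbc] at hi
  rw [sort_triple hab hbc, sort_triple hxy hyz]
  interval_cases i <;> simpa

lemma exists_lt_lt_of_card_eq_three {t : Finset ℕ} (h : t.card = 3) :
    ∃ x y z, x < y ∧ y < z ∧ t = {x, y, z} := by
  have hlen : (t.sort (· ≤ ·)).length = 3 := by rw [length_sort, h]
  have hsorted := (sortedLT_sort t).pairwise
  match hl : t.sort (· ≤ ·), hlen with
  | [x, y, z], _ =>
    rw [hl] at hsorted
    simp only [List.pairwise_cons, List.mem_cons, List.not_mem_nil, or_false, forall_eq_or_imp,
      forall_eq, List.Pairwise.nil] at hsorted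
    refine ⟨x, y, z, hsorted.1.1, hsorted.2.1, ?_⟩
    ext a
    rw [← mem_sort (· ≤ ·), hl]
    simp

section Stable

variable {n : ℕ} {F : Finset (Finset ℕ)}

lemma IsStable.triple_mem_of_le (hst : IsStable n F) {a b c x y z : ℕ} (hxyz : {x, y, z} ∈ F)
    (hxy : x < y) (hyz : y < z) (hab : a < b) (hbc : b < c) (ha : 1 ≤ a) (hax : a ≤ x)
    (hby : b ≤ y) (hcz : c ≤ z) (hz : z ≤ n) : {a, b, c} ∈ F := by
  refine hst _ _ (fun w hw => ?_) hxyz (precS_triple hab hbc hxy hyz hax hby hcz)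
  simp only [mem_insert, mem_singleton] at hw
  rw [mem_Icc]
  omega

lemma IsStable.two_three_four_mem (hst : IsStable n F)
    (hF : ∀ e ∈ F, e ⊆ Icc 1 n ∧ e.card = 3) {g : Finset ℕ} (hg : g ∈ F) (h1 : 1 ∉ g) :
    {2, 3, 4} ∈ F := by
  obtain ⟨x, y, z, hxy, hyz, rfl⟩ := exists_lt_lt_of_card_eq_three (hF _ hg).2
  have hx := (hF _ hg).1 (by simp : x ∈ _)
  have hz := (hF _ hg).1 (by simp : z ∈ _)
  have hx1 : x ≠ 1 := fun h => h1 (by simp [h])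
  rw [mem_Icc] at hx hz
  exact hst.triple_mem_of_le hg hxy hyz (by norm_num) (by norm_num) (by norm_num) (by omega)
    (by omega) (by omega) hz.2

lemma IsStable.insert_one_mem (hst : IsStable n F) (hF : ∀ e ∈ F, e ⊆ Icc 1 n ∧ e.card = 3)
    {e f : Finset ℕ} (hf : f ∈ F) (hef : e ⊆ f) (he : e.card = 2) (h1 : 1 ∉ e) :
    insert 1 e ∈ F := by
  obtain ⟨x, y, z, hxy, hyz, rfl⟩ := exists_lt_lt_of_card_eq_three (hF _ hf).2
  obtain ⟨a, b, hab, rfl⟩ : ∃ a b, a < b ∧ e = {a, b} := by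
    obtain ⟨a, b, hne, rfl⟩ := card_eq_two.mp he
    rcases hne.lt_or_gt with h | h
    exacts [⟨a, b, h, rfl⟩, ⟨b, a, h, pair_comm a b⟩]
  have ha := (hF _ hf).1 (hef (by simp : a ∈ _))
  have hx := (hF _ hf).1 (by simp : x ∈ _)
  have hz := (hF _ hf).1 (by simp : z ∈ _)
  have ha1 : a ≠ 1 := fun h => h1 (by simp [h])
  have hay : a ≤ y ∧ b ≤ z := by
    have hmem := And.intro (hef (by simp : a ∈ _)) (hef (by simp : b ∈ _))
    simp only [mem_insert, mem_singleton] at hmem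
    omega
  rw [mem_Icc] at ha hx hz
  exact hst.triple_mem_of_le hf hxy hyz (by omega) hab le_rfl hx.1 hay.1 hay.2 hz.2

end Stable

lemma mem_shadow2 {F : Finset (Finset ℕ)} {e : Finset ℕ} :
    e ∈ shadow2 F ↔ (∃ f ∈ F, e ⊆ f) ∧ e.card = 2 := by
  simp only [shadow2, mem_biUnion, mem_powersetCard]
  exact ⟨fun ⟨f, hf, hef, he⟩ => ⟨⟨f, hf, hef⟩, he⟩, fun ⟨⟨f, hf, hef⟩, he⟩ => ⟨f, hf, hef, he⟩⟩

lemma mem_del {F : Finset (Finset ℕ)} {e : Finset ℕ} {i : ℕ} :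
    e ∈ del F i ↔ e ∈ F ∧ Disjoint e (Icc 1 i) :=
  mem_filter

lemma le_card_biUnion_insert_image_insert_one {M : Finset (Finset ℕ)} (hM : M.Nonempty)
    (hdisj : (M : Set (Finset ℕ)).PairwiseDisjoint id) (hcard : ∀ e ∈ M, e.card = 2)
    (h4 : ∀ e ∈ M, Disjoint e (Icc 1 4)) :
    2 * M.card + 4 ≤ ((insert {2, 3, 4} (M.image (insert 1))).biUnion id).card := by
  have hcover : Icc 1 4 ∪ M.biUnion id ⊆ (insert {2, 3, 4} (M.image (insert 1))).biUnion id := by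
    intro x hx
    simp only [mem_union, mem_biUnion, mem_insert, mem_image, id_eq, exists_eq_or_imp,
      exists_exists_and_eq_and, mem_Icc, mem_singleton] at hx ⊢
    obtain ⟨e, he⟩ := hM
    rcases hx with hx | ⟨e', he', hx⟩
    · by_cases hx1 : x = 1
      · exact Or.inr ⟨e, he, Or.inl hx1⟩
      · left; omega
    · exact Or.inr ⟨e', he', Or.inr hx⟩
  have hdisj4 : Disjoint (Icc 1 4) (M.biUnion id) :=
    (disjoint_biUnion_right _ _ _).mpr fun e he => (h4 e he).symm
  calc 2 * M.card + 4 = (Icc 1 4 ∪ M.biUnion id).card := by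
        rw [card_union_of_disjoint hdisj4, card_biUnion hdisj,
          sum_const_nat (f := fun e => #(id e)) hcard, Nat.card_Icc]
        ring
    _ ≤ _ := card_le_card hcover

/-- Claim 1 of Lemma 3.2: nu(shadow F - [4]) ≤ s - 2. -/
theorem shadow_del_four (n s : ℕ) (hs : 2 ≤ s)
    (F : Finset (Finset ℕ))
    (hF : ∀ e ∈ F, e ⊆ Finset.Icc 1 n ∧ e.card = 3)
    (hst : IsStable n F)
    (hU : HasU F s (2 * s + 1))
    (hnu : 2 ≤ matchNum F) :
    matchNum (del (shadow2 F) 4) ≤ s - 2 := by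
  by_contra! hlarge
  obtain ⟨M, hMsub, hMdisj, hMcard⟩ :=
    exists_matching_of_le_matchNum (show s - 1 ≤ matchNum (del (shadow2 F) 4) by omega)
  have hM : ∀ e ∈ M, ((∃ f ∈ F, e ⊆ f) ∧ e.card = 2) ∧ Disjoint e (Icc 1 4) := fun e he => by
    simpa only [mem_del, mem_shadow2] using hMsub he
  obtain ⟨g, hg, h1g⟩ := exists_mem_notMem_of_two_le_matchNum hnu 1
  set G : Finset (Finset ℕ) := insert {2, 3, 4} (M.image (insert 1))
  have hGF : G ⊆ F := by
    refine insert_subset (hst.two_three_four_mem hF hg h1g) (image_subset_iff.mpr fun e he => ?_)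
    obtain ⟨⟨⟨f, hf, hef⟩, he2⟩, he4⟩ := hM e he
    exact hst.insert_one_mem hF hf hef he2 fun h1 => disjoint_left.mp he4 h1 (by simp)
  have hGs : G.card ≤ s :=
    (card_insert_le _ _).trans (by have := card_image_le (s := M) (f := insert 1); omega)
  have hGcover : 2 * M.card + 4 ≤ (G.biUnion id).card :=
    le_card_biUnion_insert_image_insert_one (card_pos.mp (by omega)) hMdisj
      (fun e he => (hM e he).1.2) (fun e he => (hM e he).2)
  have hGU := hU.card_biUnion_le hGF (insert_nonempty _ _) hGs
  omega
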